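/- arXiv:1507.08976 — 5 statements merged into one kernel-verified Lean document; each statement's English description precedes it below -/
import Mathlib

section
/- Let A, B, K be groups, with A acting on B (written ᵃb), and A and B acting on K (written ᵃk and ᵇk). Given a short exact sequence 1 → K → G →^ρ B ⋊ A → 1 and homomorphisms ι_1 : A → G, ι_2 : B → G with ρ∘ι_1 and ρ∘ι_2 the standard inclusions, where the actions on K are given by conjugation by ι_1 and ι_2, define λ(a,b) = ι_1(a) ι_2(b) ι_1(a)^{-1} ι_2(ᵃb)^{-1}. Then λ takes values in K and satisfies: (TB1) λ(a, b_1 b_2) = λ(a,b_1) · (^{ᵃb_1})(λ(a,b_2)); (TB2) λ(a_1 a_2, b) = (^{a_1})(λ(a_2,b)) · λ(a_1, ^{a_2}b); (TB3) λ(a,b) · (^{ᵃb})((^{a})k) · λ(a,b)^{-1} = (^{a})((^{b})k) for all k ∈ K. -/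
/-!
The whole computation lives in `G`: the defining identity `λ(a,b) ι₂(ᵃb) ι₁(a) = ι₁(a) ι₂(b)`
turns TB3 into the statement that conjugating by `ι₁(a) ι₂(b)` can be done in two steps, while
TB1 and TB2 are cancellations in the free expansion of `λ`. Membership in `ker ρ` holds because
`ρ` maps `λ` to the twisted commutator of the standard inclusions into `B ⋊ A`, which is trivial
since conjugation by `inr a` acts on `inl B` through `φ a`.
-/

/-- The "twisted commutator" `λ(a,b) = ι₁(a) ι₂(b) ι₁(a)⁻¹ ι₂(ᵃb)⁻¹`. -/
def twistedComm {A B G : Type*} [Group A] [Group B] [Group G]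
    (φAB : A →* MulAut B) (ι₁ : A →* G) (ι₂ : B →* G) (a : A) (b : B) : G :=
  ι₁ a * ι₂ b * (ι₁ a)⁻¹ * (ι₂ (φAB a b))⁻¹

section TwistedComm

variable {A B G H : Type*} [Group A] [Group B] [Group G] [Group H]
  (φ : A →* MulAut B) (ι₁ : A →* G) (ι₂ : B →* G)

open SemidirectProduct

theorem map_twistedComm (f : G →* H) (a : A) (b : B) :
    f (twistedComm φ ι₁ ι₂ a b) = twistedComm φ (f.comp ι₁) (f.comp ι₂) a b := by
  simp only [twistedComm, map_mul, map_inv, MonoidHom.comp_apply]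

theorem twistedComm_inr_inl (a : A) (b : B) :
    twistedComm φ (inr : A →* B ⋊[φ] A) inl a b = 1 := by
  rw [twistedComm, inl_aut, map_inv, mul_inv_eq_one]

theorem twistedComm_mem_ker (ρ : G →* B ⋊[φ] A) (h₁ : ρ.comp ι₁ = inr) (h₂ : ρ.comp ι₂ = inl)
    (a : A) (b : B) : twistedComm φ ι₁ ι₂ a b ∈ ρ.ker := by
  rw [MonoidHom.mem_ker, map_twistedComm, h₁, h₂, twistedComm_inr_inl]

theorem twistedComm_mul_mul (a : A) (b : B) :
    twistedComm φ ι₁ ι₂ a b * ι₂ (φ a b) * ι₁ a = ι₁ a * ι₂ b := by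
  simp only [twistedComm, inv_mul_cancel_right]

theorem twistedComm_mul_right (a : A) (b₁ b₂ : B) :
    twistedComm φ ι₁ ι₂ a (b₁ * b₂) =
      twistedComm φ ι₁ ι₂ a b₁ * (ι₂ (φ a b₁) * twistedComm φ ι₁ ι₂ a b₂ * (ι₂ (φ a b₁))⁻¹) := by
  simp only [twistedComm, map_mul]
  group

theorem twistedComm_mul_left (a₁ a₂ : A) (b : B) :
    twistedComm φ ι₁ ι₂ (a₁ * a₂) b =
      ι₁ a₁ * twistedComm φ ι₁ ι₂ a₂ b * (ι₁ a₁)⁻¹ * twistedComm φ ι₁ ι₂ a₁ (φ a₂ b) := by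
  simp only [twistedComm, map_mul, MulAut.mul_apply]
  group

theorem twistedComm_conj_conj (a : A) (b : B) (k : G) :
    twistedComm φ ι₁ ι₂ a b * (ι₂ (φ a b) * (ι₁ a * k * (ι₁ a)⁻¹) * (ι₂ (φ a b))⁻¹) *
        (twistedComm φ ι₁ ι₂ a b)⁻¹ =
      ι₁ a * (ι₂ b * k * (ι₂ b)⁻¹) * (ι₁ a)⁻¹ :=
  calc _ = twistedComm φ ι₁ ι₂ a b * ι₂ (φ a b) * ι₁ a * k *
        (twistedComm φ ι₁ ι₂ a b * ι₂ (φ a b) * ι₁ a)⁻¹ := by group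
    _ = ι₁ a * ι₂ b * k * (ι₁ a * ι₂ b)⁻¹ := by rw [twistedComm_mul_mul]
    _ = _ := by group

end TwistedComm

theorem twistedComm_twisted_bilinear_general {A B G : Type*} [Group A] [Group B] [Group G]
    (φAB : A →* MulAut B)
    (ρ : G →* B ⋊[φAB] A)
    (ι₁ : A →* G) (ι₂ : B →* G)
    (h₁ : ∀ a : A, ρ (ι₁ a) = SemidirectProduct.inr a)
    (h₂ : ∀ b : B, ρ (ι₂ b) = SemidirectProduct.inl b) :
    -- λ takes values in K = ker ρ
    (∀ (a : A) (b : B), twistedComm φAB ι₁ ι₂ a b ∈ ρ.ker) ∧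
    -- TB1
    (∀ (a : A) (b₁ b₂ : B),
      twistedComm φAB ι₁ ι₂ a (b₁ * b₂) =
        twistedComm φAB ι₁ ι₂ a b₁ *
          (ι₂ (φAB a b₁) * twistedComm φAB ι₁ ι₂ a b₂ * (ι₂ (φAB a b₁))⁻¹)) ∧
    -- TB2
    (∀ (a₁ a₂ : A) (b : B),
      twistedComm φAB ι₁ ι₂ (a₁ * a₂) b =
        (ι₁ a₁ * twistedComm φAB ι₁ ι₂ a₂ b * (ι₁ a₁)⁻¹) *
          twistedComm φAB ι₁ ι₂ a₁ (φAB a₂ b)) ∧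
    -- TB3
    (∀ (a : A) (b : B), ∀ k ∈ ρ.ker,
      twistedComm φAB ι₁ ι₂ a b *
          (ι₂ (φAB a b) * (ι₁ a * k * (ι₁ a)⁻¹) * (ι₂ (φAB a b))⁻¹) *
          (twistedComm φAB ι₁ ι₂ a b)⁻¹ =
        ι₁ a * (ι₂ b * k * (ι₂ b)⁻¹) * (ι₁ a)⁻¹) :=
  ⟨twistedComm_mem_ker φAB ι₁ ι₂ ρ (MonoidHom.ext h₁) (MonoidHom.ext h₂),
    twistedComm_mul_right φAB ι₁ ι₂, twistedComm_mul_left φAB ι₁ ι₂,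
    fun a b k _ => twistedComm_conj_conj φAB ι₁ ι₂ a b k⟩

/-- Given a short exact sequence `1 → K → G →ρ B ⋊ A → 1` (with `K = ker ρ`, `ρ`
surjective) and homomorphisms `ι₁ : A → G`, `ι₂ : B → G` with `ρ ∘ ι₁`, `ρ ∘ ι₂` the
standard inclusions, the map `λ(a,b) = ι₁(a) ι₂(b) ι₁(a)⁻¹ ι₂(ᵃb)⁻¹` takes values in `K`
and satisfies the twisted bilinearity axioms TB1, TB2, TB3, where the actions of `A` and
`B` on `K` are conjugation by `ι₁` and `ι₂`. -/
theorem twistedComm_twisted_bilinear {A B G : Type*} [Group A] [Group B] [Group G]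
    (φAB : A →* MulAut B)
    (ρ : G →* B ⋊[φAB] A) (hρ : Function.Surjective ρ)
    (ι₁ : A →* G) (ι₂ : B →* G)
    (h₁ : ∀ a : A, ρ (ι₁ a) = SemidirectProduct.inr a)
    (h₂ : ∀ b : B, ρ (ι₂ b) = SemidirectProduct.inl b) :
    -- λ takes values in K = ker ρ
    (∀ (a : A) (b : B), twistedComm φAB ι₁ ι₂ a b ∈ ρ.ker) ∧
    -- TB1
    (∀ (a : A) (b₁ b₂ : B),
      twistedComm φAB ι₁ ι₂ a (b₁ * b₂) =
        twistedComm φAB ι₁ ι₂ a b₁ *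
          (ι₂ (φAB a b₁) * twistedComm φAB ι₁ ι₂ a b₂ * (ι₂ (φAB a b₁))⁻¹)) ∧
    -- TB2
    (∀ (a₁ a₂ : A) (b : B),
      twistedComm φAB ι₁ ι₂ (a₁ * a₂) b =
        (ι₁ a₁ * twistedComm φAB ι₁ ι₂ a₂ b * (ι₁ a₁)⁻¹) *
          twistedComm φAB ι₁ ι₂ a₁ (φAB a₂ b)) ∧
    -- TB3
    (∀ (a : A) (b : B), ∀ k ∈ ρ.ker,
      twistedComm φAB ι₁ ι₂ a b *
          (ι₂ (φAB a b) * (ι₁ a * k * (ι₁ a)⁻¹) * (ι₂ (φAB a b))⁻¹) *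
          (twistedComm φAB ι₁ ι₂ a b)⁻¹ =
        ι₁ a * (ι₂ b * k * (ι₂ b)⁻¹) * (ι₁ a)⁻¹) :=
  twistedComm_twisted_bilinear_general φAB ρ ι₁ ι₂ h₁ h₂
end

section
/- Let A, B, K be groups with A acting on B and with A, B acting on K, and let λ : A × B → K be a twisted bilinear map (satisfying TB1, TB2, TB3). Define φ : B ⋊ A → Aut(K) by φ(b,a)(k) = ᵇ(ᵃk). Then for all q_1, q_2 in B ⋊ A and k ∈ K, φ(q_1)(φ(q_2)(k)) = γ(q_1,q_2) · φ(q_1 q_2)(k) · γ(q_1,q_2)^{-1}, where γ((b_1,a_1),(b_2,a_2)) = ^{b_1}(λ(a_1, b_2)). -/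
theorem twisted_bilinear_phi_conj_general {A B K : Type*} [Group A] [Group B] [Group K]
    (φAB : A →* MulAut B) (φAK : A →* MulAut K) (φBK : B →* MulAut K)
    (l : A → B → K)
    (tb3 : ∀ (a : A) (b : B) (k : K),
      l a b * φBK (φAB a b) (φAK a k) * (l a b)⁻¹ = φAK a (φBK b k)) :
    ∀ (q₁ q₂ : B ⋊[φAB] A) (k : K),
      φBK q₁.left (φAK q₁.right (φBK q₂.left (φAK q₂.right k))) =
        φBK q₁.left (l q₁.right q₂.left) *
          φBK (q₁ * q₂).left (φAK (q₁ * q₂).right k) *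
          (φBK q₁.left (l q₁.right q₂.left))⁻¹ := by
  rintro ⟨b₁, a₁⟩ ⟨b₂, a₂⟩ k
  calc φBK b₁ (φAK a₁ (φBK b₂ (φAK a₂ k)))
      = φBK b₁ (l a₁ b₂ * φBK (φAB a₁ b₂) (φAK a₁ (φAK a₂ k)) * (l a₁ b₂)⁻¹) := by
        rw [tb3]
    _ = φBK b₁ (l a₁ b₂) * φBK (b₁ * φAB a₁ b₂) (φAK (a₁ * a₂) k) *
          (φBK b₁ (l a₁ b₂))⁻¹ := by
        simp only [map_mul, map_inv, MulAut.mul_apply]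

/-- Let `A, B, K` be groups with `A` acting on `B` (via `φAB`) and `A`, `B` acting on `K`
(via `φAK`, `φBK`), and let `λ : A × B → K` be a twisted bilinear map. Define
`φ : B ⋊ A → Aut(K)` by `φ(b,a)(k) = ᵇ(ᵃk)` and
`γ(q₁,q₂) = ^{b₁}(λ(a₁,b₂))`. Then `φ(q₁)(φ(q₂)(k)) = γ(q₁,q₂)·φ(q₁q₂)(k)·γ(q₁,q₂)⁻¹`. -/
theorem twisted_bilinear_phi_conj {A B K : Type*} [Group A] [Group B] [Group K]
    (φAB : A →* MulAut B) (φAK : A →* MulAut K) (φBK : B →* MulAut K)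
    (l : A → B → K)
    (tb1 : ∀ (a : A) (b₁ b₂ : B),
      l a (b₁ * b₂) = l a b₁ * φBK (φAB a b₁) (l a b₂))
    (tb2 : ∀ (a₁ a₂ : A) (b : B),
      l (a₁ * a₂) b = φAK a₁ (l a₂ b) * l a₁ (φAB a₂ b))
    (tb3 : ∀ (a : A) (b : B) (k : K),
      l a b * φBK (φAB a b) (φAK a k) * (l a b)⁻¹ = φAK a (φBK b k)) :
    ∀ (q₁ q₂ : B ⋊[φAB] A) (k : K),
      φBK q₁.left (φAK q₁.right (φBK q₂.left (φAK q₂.right k))) =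
        φBK q₁.left (l q₁.right q₂.left) *
          φBK (q₁ * q₂).left (φAK (q₁ * q₂).right k) *
          (φBK q₁.left (l q₁.right q₂.left))⁻¹ :=
  twisted_bilinear_phi_conj_general φAB φAK φBK l tb3
end

section
/- Let A, B, K be groups with A acting on B and with A, B acting on K by automorphisms, and let λ : A × B → K be a twisted bilinear map. With γ((b_1,a_1),(b_2,a_2)) = ^{b_1}(λ(a_1, b_2)), the cocycle identity γ(q_1,q_2)·γ(q_1 q_2, q_3) = φ(q_1)(γ(q_2,q_3)) · γ(q_1, q_2 q_3) holds for all q_1, q_2, q_3 ∈ B ⋊ A, where φ(b,a)(k) = ᵇ(ᵃk). -/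
/-! Writing `qᵢ = (bᵢ, aᵢ)`, both sides of the identity are `ᵇ¹(-)` applied to an element of `K`.
Expanding `λ(a₁a₂, b₃)` by (TB2) on the left and `λ(a₁, b₂ · ᵃ²b₃)` by (TB1) on the right, the two
agree once `λ(a₁, b₂)` is moved past `ᵃ¹ᵇ²λ(a₂, b₃)`, and (TB3) says exactly how to do that. -/

section TwistedBilinear

variable {A B K : Type*} [Group A] [Group B] [Group K]
  (φAB : A →* MulAut B) (φAK : A →* MulAut K) (φBK : B →* MulAut K) (l : A → B → K)

theorem twisted_mul_comm_of_conj
    (tb3 : ∀ (a : A) (b : B) (k : K),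
      l a b * φBK (φAB a b) (φAK a k) * (l a b)⁻¹ = φAK a (φBK b k))
    (a : A) (b : B) (k : K) :
    l a b * φBK (φAB a b) (φAK a k) = φAK a (φBK b k) * l a b :=
  mul_inv_eq_iff_eq_mul.mp (tb3 a b k)

end TwistedBilinear

/-- Let `A, B, K` be groups with `A` acting on `B` (via `φAB`) and `A`, `B` acting on `K`
(via `φAK`, `φBK`), and let `λ : A × B → K` be a twisted bilinear map. With
`γ((b₁,a₁),(b₂,a₂)) = ^{b₁}(λ(a₁,b₂))` and `φ(b,a)(k) = ᵇ(ᵃk)`, the cocycle identity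
`γ(q₁,q₂)·γ(q₁q₂,q₃) = φ(q₁)(γ(q₂,q₃))·γ(q₁,q₂q₃)` holds. -/
theorem twisted_bilinear_cocycle {A B K : Type*} [Group A] [Group B] [Group K]
    (φAB : A →* MulAut B) (φAK : A →* MulAut K) (φBK : B →* MulAut K)
    (l : A → B → K)
    (tb1 : ∀ (a : A) (b₁ b₂ : B),
      l a (b₁ * b₂) = l a b₁ * φBK (φAB a b₁) (l a b₂))
    (tb2 : ∀ (a₁ a₂ : A) (b : B),
      l (a₁ * a₂) b = φAK a₁ (l a₂ b) * l a₁ (φAB a₂ b))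
    (tb3 : ∀ (a : A) (b : B) (k : K),
      l a b * φBK (φAB a b) (φAK a k) * (l a b)⁻¹ = φAK a (φBK b k)) :
    ∀ q₁ q₂ q₃ : B ⋊[φAB] A,
      φBK q₁.left (l q₁.right q₂.left) *
          φBK (q₁ * q₂).left (l (q₁ * q₂).right q₃.left) =
        φBK q₁.left (φAK q₁.right (φBK q₂.left (l q₂.right q₃.left))) *
          φBK q₁.left (l q₁.right (q₂ * q₃).left) := by
  rintro ⟨b₁, a₁⟩ ⟨b₂, a₂⟩ ⟨b₃, a₃⟩
  simp only [SemidirectProduct.mul_left, SemidirectProduct.mul_right, map_mul (φBK),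
    MulAut.mul_apply, ← map_mul (φBK b₁)]
  congr 1
  calc l a₁ b₂ * φBK (φAB a₁ b₂) (l (a₁ * a₂) b₃)
      = l a₁ b₂ * φBK (φAB a₁ b₂) (φAK a₁ (l a₂ b₃)) *
          φBK (φAB a₁ b₂) (l a₁ (φAB a₂ b₃)) := by rw [tb2, map_mul, mul_assoc]
    _ = φAK a₁ (φBK b₂ (l a₂ b₃)) * l a₁ b₂ * φBK (φAB a₁ b₂) (l a₁ (φAB a₂ b₃)) := by
        rw [twisted_mul_comm_of_conj φAB φAK φBK l tb3]
    _ = φAK a₁ (φBK b₂ (l a₂ b₃)) * l a₁ (b₂ * φAB a₂ b₃) := by rw [tb1, mul_assoc]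
end

section
/- Let A, B, K be groups with compatible actions and λ : A × B → K a twisted bilinear map. Then the set G = K × (B ⋊ A) with multiplication (k_1, q_1)(k_2, q_2) = (k_1 · φ(q_1)(k_2) · γ(q_1,q_2), q_1 q_2), where φ(b,a)(k) = ᵇ(ᵃk) and γ((b_1,a_1),(b_2,a_2)) = ^{b_1}λ(a_1,b_2), is a group, and the projection G → B ⋊ A is a surjective homomorphism with kernel isomorphic to K via k ↦ (k, 1). -/
/-!
Associativity is the cocycle condition for `γ` twisted by `φ`: expanding both sides with
TB1 and TB2 leaves two products that differ only by moving `ᵇ(ᵃk)` past `λ(a,b)`, which is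
exactly TB3. Normalisation `λ(a,1) = λ(1,b) = 1` (from TB1 and TB2) makes `(1,1)` a two-sided
identity, and an explicit right inverse is automatically a left inverse.
-/

/-- The multiplication `(k₁,q₁)(k₂,q₂) = (k₁ · φ(q₁)(k₂) · γ(q₁,q₂), q₁q₂)` on
`K × (B ⋊ A)` determined by a twisted bilinear map `λ : A × B → K`, where
`φ(b,a)(k) = ᵇ(ᵃk)` and `γ((b₁,a₁),(b₂,a₂)) = ^{b₁}λ(a₁,b₂)`. -/
def extMul {A B K : Type*} [Group A] [Group B] [Group K]
    (φAB : A →* MulAut B) (φAK : A →* MulAut K) (φBK : B →* MulAut K)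
    (l : A → B → K)
    (p q : K × (B ⋊[φAB] A)) : K × (B ⋊[φAB] A) :=
  (p.1 * φBK p.2.left (φAK p.2.right q.1) *
      φBK p.2.left (l p.2.right q.2.left),
    p.2 * q.2)

lemma exists_mul_eq_and_mul_eq_of_exists_mul_eq {G : Type*} (m : G → G → G) (e : G)
    (assoc : ∀ p q r, m (m p q) r = m p (m q r))
    (one_m : ∀ p, m e p = p) (m_one : ∀ p, m p e = p)
    (right_inv : ∀ p, ∃ q, m p q = e) (p : G) :
    ∃ q, m p q = e ∧ m q p = e := by
  obtain ⟨q, hq⟩ := right_inv p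
  obtain ⟨r, hr⟩ := right_inv q
  refine ⟨q, hq, ?_⟩
  calc m q p = m (m q p) (m q r) := by rw [hr, m_one]
    _ = m q (m (m p q) r) := by rw [assoc, ← assoc p q r]
    _ = e := by rw [hq, one_m, hr]

section TwistedBilinear

variable {A B K : Type*} [Group A] [Group B] [Group K]
  {φAB : A →* MulAut B} {φAK : A →* MulAut K} {φBK : B →* MulAut K} {l : A → B → K}

lemma twisted_apply_one_right
    (tb1 : ∀ (a : A) (b₁ b₂ : B), l a (b₁ * b₂) = l a b₁ * φBK (φAB a b₁) (l a b₂))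
    (a : A) : l a 1 = 1 := by
  simpa using tb1 a 1 1

lemma twisted_apply_one_left
    (tb2 : ∀ (a₁ a₂ : A) (b : B), l (a₁ * a₂) b = φAK a₁ (l a₂ b) * l a₁ (φAB a₂ b))
    (b : B) : l 1 b = 1 := by
  simpa using tb2 1 1 b

lemma twisted_conj_eq
    (tb3 : ∀ (a : A) (b : B) (k : K),
      l a b * φBK (φAB a b) (φAK a k) * (l a b)⁻¹ = φAK a (φBK b k))
    (a : A) (b : B) (k : K) :
    φBK (φAB a b) (φAK a k) = (l a b)⁻¹ * φAK a (φBK b k) * l a b := by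
  rw [← tb3]
  group

variable (φAB φAK φBK l)

lemma extMul_snd (p q : K × (B ⋊[φAB] A)) : (extMul φAB φAK φBK l p q).2 = p.2 * q.2 := rfl

lemma extMul_assoc
    (tb1 : ∀ (a : A) (b₁ b₂ : B), l a (b₁ * b₂) = l a b₁ * φBK (φAB a b₁) (l a b₂))
    (tb2 : ∀ (a₁ a₂ : A) (b : B), l (a₁ * a₂) b = φAK a₁ (l a₂ b) * l a₁ (φAB a₂ b))
    (tb3 : ∀ (a : A) (b : B) (k : K),
      l a b * φBK (φAB a b) (φAK a k) * (l a b)⁻¹ = φAK a (φBK b k))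
    (p q r : K × (B ⋊[φAB] A)) :
    extMul φAB φAK φBK l (extMul φAB φAK φBK l p q) r =
      extMul φAB φAK φBK l p (extMul φAB φAK φBK l q r) := by
  obtain ⟨k₁, b₁, a₁⟩ := p
  obtain ⟨k₂, b₂, a₂⟩ := q
  obtain ⟨k₃, b₃, a₃⟩ := r
  refine Prod.ext ?_ (mul_assoc _ _ _)
  simp only [extMul, SemidirectProduct.mul_left, SemidirectProduct.mul_right, map_mul,
    MulAut.mul_apply, tb1, tb2, twisted_conj_eq tb3, map_inv, mul_assoc]
  group

lemma extMul_one_left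
    (tb2 : ∀ (a₁ a₂ : A) (b : B), l (a₁ * a₂) b = φAK a₁ (l a₂ b) * l a₁ (φAB a₂ b))
    (p : K × (B ⋊[φAB] A)) : extMul φAB φAK φBK l (1, 1) p = p := by
  simp [extMul, twisted_apply_one_left tb2]

lemma extMul_one_right
    (tb1 : ∀ (a : A) (b₁ b₂ : B), l a (b₁ * b₂) = l a b₁ * φBK (φAB a b₁) (l a b₂))
    (p : K × (B ⋊[φAB] A)) : extMul φAB φAK φBK l p (1, 1) = p := by
  simp [extMul, twisted_apply_one_right tb1]

lemma exists_extMul_eq_one (p : K × (B ⋊[φAB] A)) :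
    ∃ q, extMul φAB φAK φBK l p q = (1, 1) := by
  obtain ⟨k, x⟩ := p
  refine ⟨((φAK x.right).symm ((φBK x.left).symm
    (k⁻¹ * (φBK x.left (l x.right x⁻¹.left))⁻¹)), x⁻¹), Prod.ext ?_ (mul_inv_cancel x)⟩
  simp [extMul]

lemma extMul_mk_one
    (tb2 : ∀ (a₁ a₂ : A) (b : B), l (a₁ * a₂) b = φAK a₁ (l a₂ b) * l a₁ (φAB a₂ b))
    (k k' : K) : extMul φAB φAK φBK l (k, 1) (k', 1) = (k * k', 1) := by
  simp [extMul, twisted_apply_one_left tb2]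

end TwistedBilinear

/-- For a twisted bilinear map `λ : A × B → K`, the set `K × (B ⋊ A)` with multiplication
`(k₁,q₁)(k₂,q₂) = (k₁ · φ(q₁)(k₂) · γ(q₁,q₂), q₁q₂)` is a group; the projection to
`B ⋊ A` is a surjective homomorphism whose kernel is `{(k,1)}`, isomorphic to `K` via
`k ↦ (k,1)`. -/
theorem extMul_group {A B K : Type*} [Group A] [Group B] [Group K]
    (φAB : A →* MulAut B) (φAK : A →* MulAut K) (φBK : B →* MulAut K)
    (l : A → B → K)
    (tb1 : ∀ (a : A) (b₁ b₂ : B),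
      l a (b₁ * b₂) = l a b₁ * φBK (φAB a b₁) (l a b₂))
    (tb2 : ∀ (a₁ a₂ : A) (b : B),
      l (a₁ * a₂) b = φAK a₁ (l a₂ b) * l a₁ (φAB a₂ b))
    (tb3 : ∀ (a : A) (b : B) (k : K),
      l a b * φBK (φAB a b) (φAK a k) * (l a b)⁻¹ = φAK a (φBK b k)) :
    -- group axioms
    (∀ p q r : K × (B ⋊[φAB] A),
      extMul φAB φAK φBK l (extMul φAB φAK φBK l p q) r =
        extMul φAB φAK φBK l p (extMul φAB φAK φBK l q r)) ∧
    (∀ p : K × (B ⋊[φAB] A), extMul φAB φAK φBK l (1, 1) p = p) ∧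
    (∀ p : K × (B ⋊[φAB] A), extMul φAB φAK φBK l p (1, 1) = p) ∧
    (∀ p : K × (B ⋊[φAB] A), ∃ q : K × (B ⋊[φAB] A),
      extMul φAB φAK φBK l p q = (1, 1) ∧ extMul φAB φAK φBK l q p = (1, 1)) ∧
    -- the projection is a surjective homomorphism with kernel `{(k,1)} ≅ K`
    (∀ p q : K × (B ⋊[φAB] A), (extMul φAB φAK φBK l p q).2 = p.2 * q.2) ∧
    Function.Surjective (Prod.snd : K × (B ⋊[φAB] A) → B ⋊[φAB] A) ∧
    (∀ p : K × (B ⋊[φAB] A), p.2 = 1 ↔ ∃ k : K, p = (k, 1)) ∧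
    (∀ k k' : K, extMul φAB φAK φBK l (k, 1) (k', 1) = (k * k', 1)) := by
  have assoc := extMul_assoc φAB φAK φBK l tb1 tb2 tb3
  have one_mul := extMul_one_left φAB φAK φBK l tb2
  have mul_one := extMul_one_right φAB φAK φBK l tb1
  refine ⟨assoc, one_mul, mul_one,
    exists_mul_eq_and_mul_eq_of_exists_mul_eq _ _ assoc one_mul mul_one
      (exists_extMul_eq_one φAB φAK φBK l),
    extMul_snd φAB φAK φBK l, Prod.snd_surjective, fun p => ?_, extMul_mk_one φAB φAK φBK l tb2⟩
  exact ⟨fun h => ⟨p.1, Prod.ext rfl h⟩, by rintro ⟨k, rfl⟩; rfl⟩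
end

section
/- Let F be free on basis X, let IA(F) ≤ Aut(F) be the subgroup acting trivially on F^{ab} ≅ Z^{|X|}, and define τ : IA(F) → Hom(Z^{|X|}, ⋀² Z^{|X|}) by τ(f)([z]) = π(f(z)·z^{-1}) for z ∈ F, where π : [F,F] → ⋀² Z^{|X|} is reduction modulo [F,[F,F]]. Then τ is a well-defined group homomorphism (the Johnson homomorphism). -/
/-!
For `f ∈ IA(F)` the displacement `f(z) z⁻¹` lies in `[F,F]` and satisfies the cocycle identity
`f(zw)(zw)⁻¹ = f(z)z⁻¹ · z (f(w)w⁻¹) z⁻¹`. Since `π` is additive on `[F,F]` and kills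
`[F,[F,F]]`, it is invariant under conjugation there, so `z ↦ π(f(z) z⁻¹)` is a homomorphism
into an abelian group. Such a homomorphism on `F` is determined by the images of the basis, hence
factors through `F^{ab} = ℤ^X`; this gives `τ(f)`. Additivity in `f` follows from
`(fg)(z) z⁻¹ = f(gz)(gz)⁻¹ · g(z)z⁻¹` and `g(z) ≡ z` modulo `[F,F]`.
-/

/-- The abelianization map `F(X) → ℤ^X`, written multiplicatively. -/
def freeAb (X : Type*) [DecidableEq X] : FreeGroup X →* Multiplicative (X → ℤ) :=
  FreeGroup.lift fun i => Multiplicative.ofAdd (Pi.single i 1)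

/-- The wedge `v ∧ w`, as an element of `⋀² ℤ^X`. -/
def wedgeSq (X : Type*) (v w : X → ℤ) : ⋀[ℤ]^2 (X → ℤ) :=
  ⟨ExteriorAlgebra.ιMulti ℤ 2 ![v, w],
    ExteriorAlgebra.ιMulti_range ℤ 2 (Set.mem_range_self _)⟩

/-- The Torelli subgroup `IA(F) ≤ Aut(F)` of automorphisms acting trivially on the
abelianization. -/
def IAsubgroup (X : Type*) [DecidableEq X] : Subgroup (MulAut (FreeGroup X)) where
  carrier := {f | ∀ z : FreeGroup X, freeAb X (f z) = freeAb X z}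
  one_mem' := fun _ => rfl
  mul_mem' := by
    intro f g hf hg z
    exact (hf (g z)).trans (hg z)
  inv_mem' := by
    intro f hf z
    have := hf (f⁻¹ z)
    simpa using this.symm

open scoped commutatorElement

open Multiplicative

section Displacement

variable {G A : Type*} [Group G] [AddCommGroup A] {π : G → A}

structure IsLowerCentralQuotientHom (π : G → A) : Prop where
  map_mul_of_mem : ∀ u ∈ (⊤ : Subgroup G).lowerCentralSeries 1,
    ∀ v ∈ (⊤ : Subgroup G).lowerCentralSeries 1, π (u * v) = π u + π v
  eq_zero_of_mem : ∀ u ∈ (⊤ : Subgroup G).lowerCentralSeries 2, π u = 0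

namespace IsLowerCentralQuotientHom

theorem map_conj (hπ : IsLowerCentralQuotientHom π) (z : G) {c : G}
    (hc : c ∈ (⊤ : Subgroup G).lowerCentralSeries 1) : π (z * c * z⁻¹) = π c := by
  have hzc : ⁅z, c⁆ ∈ (⊤ : Subgroup G).lowerCentralSeries 2 := by
    rw [← commutatorElement_inv]
    exact inv_mem (Subgroup.commutator_mem_commutator hc (Subgroup.mem_top z))
  have hzc' := Subgroup.lowerCentralSeries_antitone _ (by norm_num : 1 ≤ 2) hzc
  rw [show z * c * z⁻¹ = ⁅z, c⁆ * c by group, hπ.map_mul_of_mem _ hzc' c hc,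
    hπ.eq_zero_of_mem _ hzc, zero_add]

theorem map_displacement_mul (hπ : IsLowerCentralQuotientHom π) {f : MulAut G}
    (hf : ∀ z, f z * z⁻¹ ∈ (⊤ : Subgroup G).lowerCentralSeries 1) (z w : G) :
    π (f (z * w) * (z * w)⁻¹) = π (f z * z⁻¹) + π (f w * w⁻¹) := by
  have hconj : z * (f w * w⁻¹) * z⁻¹ ∈ (⊤ : Subgroup G).lowerCentralSeries 1 :=
    (Subgroup.lowerCentralSeries_normal _ 1).conj_mem _ (hf w) z
  have hcocycle : f (z * w) * (z * w)⁻¹ = (f z * z⁻¹) * (z * (f w * w⁻¹) * z⁻¹) := by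
    rw [map_mul]; group
  rw [hcocycle, hπ.map_mul_of_mem _ (hf z) _ hconj, hπ.map_conj z (hf w)]

def displacementHom (hπ : IsLowerCentralQuotientHom π) (f : MulAut G)
    (hf : ∀ z, f z * z⁻¹ ∈ (⊤ : Subgroup G).lowerCentralSeries 1) :
    G →* Multiplicative A :=
  MonoidHom.mk' (fun z => ofAdd (π (f z * z⁻¹))) fun z w => by
    rw [hπ.map_displacement_mul hf, ofAdd_add]

end IsLowerCentralQuotientHom

end Displacement

section FreeAbelianization

variable {X A : Type*} [DecidableEq X] [AddCommGroup A]

theorem toAdd_freeAb_of (i : X) : (freeAb X (FreeGroup.of i)).toAdd = Pi.single i 1 :=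
  congrArg toAdd FreeGroup.lift_apply_of

variable [Finite X]

noncomputable def liftFreeAb (Φ : FreeGroup X →* Multiplicative A) : (X → ℤ) →+ A :=
  ((Pi.basisFun ℤ X).constr ℤ fun i => (Φ (FreeGroup.of i)).toAdd).toAddMonoidHom

theorem liftFreeAb_freeAb (Φ : FreeGroup X →* Multiplicative A) (z : FreeGroup X) :
    liftFreeAb Φ (freeAb X z).toAdd = (Φ z).toAdd := by
  have h : (liftFreeAb Φ).toMultiplicative.comp (freeAb X) = Φ := by
    refine FreeGroup.ext_hom _ _ fun i => ?_
    change ofAdd (liftFreeAb Φ (freeAb X (FreeGroup.of i)).toAdd)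
      = ofAdd (Φ (FreeGroup.of i)).toAdd
    rw [toAdd_freeAb_of, ← Pi.basisFun_apply]
    exact congrArg ofAdd <|
      (Pi.basisFun ℤ X).constr_basis ℤ (fun j => (Φ (FreeGroup.of j)).toAdd) i
  exact congrArg toAdd (DFunLike.congr_fun h z)

theorem addMonoidHom_ext_freeAb {φ ψ : (X → ℤ) →+ A}
    (h : ∀ z : FreeGroup X, φ (freeAb X z).toAdd = ψ (freeAb X z).toAdd) : φ = ψ :=
  AddMonoidHom.toIntLinearMap_injective <| (Pi.basisFun ℤ X).ext fun i => by
    simpa [toAdd_freeAb_of] using h (FreeGroup.of i)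

end FreeAbelianization

theorem johnson_well_defined_hom_general (X : Type*) [DecidableEq X] [Fintype X]
    (π : FreeGroup X → ⋀[ℤ]^2 (X → ℤ))
    (hπ_mul : ∀ u ∈ (⊤ : Subgroup (FreeGroup X)).lowerCentralSeries 1,
      ∀ v ∈ (⊤ : Subgroup (FreeGroup X)).lowerCentralSeries 1, π (u * v) = π u + π v)
    (hπ_ker : ∀ u ∈ (⊤ : Subgroup (FreeGroup X)).lowerCentralSeries 1,
      (π u = 0 ↔ u ∈ (⊤ : Subgroup (FreeGroup X)).lowerCentralSeries 2))
    (hab_ker : ∀ z : FreeGroup X,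
      freeAb X z = 1 ↔ z ∈ (⊤ : Subgroup (FreeGroup X)).lowerCentralSeries 1) :
    ∃ τ : IAsubgroup X → ((X → ℤ) →+ ⋀[ℤ]^2 (X → ℤ)),
      (∀ (f : IAsubgroup X) (z : FreeGroup X),
        τ f (Multiplicative.toAdd (freeAb X z)) =
          π ((f : MulAut (FreeGroup X)) z * z⁻¹)) ∧
      (∀ f g : IAsubgroup X, τ (f * g) = τ f + τ g) := by
  have hπ : IsLowerCentralQuotientHom π := ⟨hπ_mul, fun u hu =>
    (hπ_ker u (Subgroup.lowerCentralSeries_antitone _ (by norm_num) hu)).mpr hu⟩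
  have hIA (f : IAsubgroup X) (z : FreeGroup X) :
      (f : MulAut (FreeGroup X)) z * z⁻¹ ∈
        (⊤ : Subgroup (FreeGroup X)).lowerCentralSeries 1 :=
    (hab_ker _).mp (by rw [map_mul, map_inv, f.2 z, mul_inv_cancel])
  let τ (f : IAsubgroup X) := liftFreeAb (hπ.displacementHom f (hIA f))
  have hτ (f : IAsubgroup X) (z : FreeGroup X) :
      τ f (freeAb X z).toAdd = π ((f : MulAut (FreeGroup X)) z * z⁻¹) :=
    liftFreeAb_freeAb _ z
  refine ⟨τ, hτ, fun f g => addMonoidHom_ext_freeAb fun z => ?_⟩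
  set gz := (g : MulAut (FreeGroup X)) z
  have hfg : ((f * g : IAsubgroup X) : MulAut (FreeGroup X)) z * z⁻¹
      = ((f : MulAut (FreeGroup X)) gz * gz⁻¹) * (gz * z⁻¹) := by
    change (f : MulAut (FreeGroup X)) gz * z⁻¹ = _
    group
  rw [AddMonoidHom.add_apply, hτ, hτ, hτ, hfg, hπ_mul _ (hIA f gz) _ (hIA g z), ← hτ f gz,
    g.2 z, hτ]

/-- The Johnson homomorphism is well defined: for `F` free on a (finite) basis `X`,
given the projection `π : [F,F] → ⋀² ℤ^X` with kernel `[F,[F,F]]`, there is a map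
`τ : IA(F) → Hom(ℤ^X, ⋀² ℤ^X)` with `τ(f)([z]) = π(f(z)·z⁻¹)` for all `z ∈ F`, and `τ` is
a group homomorphism. -/
theorem johnson_well_defined_hom (X : Type*) [DecidableEq X] [Fintype X]
    (π : FreeGroup X → ⋀[ℤ]^2 (X → ℤ))
    (hπ_comm : ∀ u v : FreeGroup X,
      π ⁅u, v⁆ = wedgeSq X (Multiplicative.toAdd (freeAb X u))
        (Multiplicative.toAdd (freeAb X v)))
    (hπ_mul : ∀ u ∈ (⊤ : Subgroup (FreeGroup X)).lowerCentralSeries 1,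
      ∀ v ∈ (⊤ : Subgroup (FreeGroup X)).lowerCentralSeries 1, π (u * v) = π u + π v)
    (hπ_ker : ∀ u ∈ (⊤ : Subgroup (FreeGroup X)).lowerCentralSeries 1,
      (π u = 0 ↔ u ∈ (⊤ : Subgroup (FreeGroup X)).lowerCentralSeries 2))
    (hab_ker : ∀ z : FreeGroup X,
      freeAb X z = 1 ↔ z ∈ (⊤ : Subgroup (FreeGroup X)).lowerCentralSeries 1) :
    ∃ τ : IAsubgroup X → ((X → ℤ) →+ ⋀[ℤ]^2 (X → ℤ)),
      (∀ (f : IAsubgroup X) (z : FreeGroup X),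
        τ f (Multiplicative.toAdd (freeAb X z)) =
          π ((f : MulAut (FreeGroup X)) z * z⁻¹)) ∧
      (∀ f g : IAsubgroup X, τ (f * g) = τ f + τ g) :=
  johnson_well_defined_hom_general X π hπ_mul hπ_ker hab_ker
end
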